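/- arXiv:2008.09511 — 2 statements merged into one kernel-verified Lean document; each statement's English description precedes it below -/
import Mathlib

section
/- Let (X_i)_{i∈ℕ} be a mutually independent family of random variables on a probability space, each taking values in {0,1}, with Σ_{i=0}^∞ E[X_i] < ∞. Let X = Σ_{i=0}^∞ X_i. Then E[X^k] < ∞ for every k ∈ ℕ. -/
open MeasureTheory ProbabilityTheory ENNReal

/-!
If `N = ∑ i ∈ s, X i` with `X i ∈ {0, 1}`, then `∏ i ∈ s, (1 + X i) = 2 ^ N` and
`N ^ k ≤ k ^ k * 2 ^ N`. By independence the product has expectation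
`∏ i ∈ s, (1 + E[X i]) ≤ exp (∑' i, E[X i])`, so the `k`-th moments of the partial sums are
bounded uniformly, and monotone convergence passes the bound to the full sum.
-/

theorem Nat.pow_le_pow_self_mul_two_pow (k m : ℕ) : m ^ k ≤ k ^ k * 2 ^ m := by
  rcases Nat.eq_zero_or_pos k with rfl | hk
  · simp [Nat.one_le_two_pow]
  -- Write `m < (q + 1) k` with `q = m / k`, and use `q + 1 ≤ 2 ^ q`.
  have hm : m ≤ (m / k + 1) * k := by rw [add_mul, one_mul]; exact (Nat.lt_div_mul_add hk).le
  calc m ^ k ≤ ((m / k + 1) * k) ^ k := Nat.pow_le_pow_left hm k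
    _ = k ^ k * (m / k + 1) ^ k := by rw [mul_pow, mul_comm]
    _ ≤ k ^ k * (2 ^ (m / k)) ^ k := by gcongr; exact Nat.lt_two_pow_self
    _ = k ^ k * 2 ^ (m / k * k) := by rw [← pow_mul]
    _ ≤ k ^ k * 2 ^ m :=
        Nat.mul_le_mul_left _ (Nat.pow_le_pow_right two_pos (Nat.div_mul_le_self m k))

theorem ENNReal.sum_pow_le_pow_self_mul_prod_one_add {ι : Type*} {f : ι → ℝ≥0∞}
    (hf : ∀ i, f i = 0 ∨ f i = 1) (s : Finset ι) (k : ℕ) :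
    (∑ i ∈ s, f i) ^ k ≤ (k : ℝ≥0∞) ^ k * ∏ i ∈ s, (1 + f i) := by
  have hbit : ∀ i, ∃ b : ℕ, f i = b ∧ 1 + f i = 2 ^ b := fun i =>
    (hf i).elim (fun h => ⟨0, by simp [h]⟩) (fun h => ⟨1, by simp [h]; norm_num⟩)
  choose b hb hb2 using hbit
  rw [Finset.sum_congr rfl fun i _ => hb i, Finset.prod_congr rfl fun i _ => hb2 i,
    Finset.prod_pow_eq_pow_sum]
  exact_mod_cast Nat.pow_le_pow_self_mul_two_pow k (∑ i ∈ s, b i)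

theorem ENNReal.prod_one_add_le_ofReal_exp_tsum {ι : Type*} {p : ι → ℝ≥0∞}
    (hp : ∑' i, p i ≠ ∞) (s : Finset ι) :
    ∏ i ∈ s, (1 + p i) ≤ ENNReal.ofReal (Real.exp (∑' i, p i).toReal) := by
  have hp_top := ENNReal.ne_top_of_tsum_ne_top hp
  calc ∏ i ∈ s, (1 + p i) = ENNReal.ofReal (∏ i ∈ s, (1 + (p i).toReal)) := by
        rw [ofReal_prod_of_nonneg fun i _ => by positivity]
        refine Finset.prod_congr rfl fun i _ => ?_
        rw [ofReal_add zero_le_one toReal_nonneg, ofReal_one, ofReal_toReal (hp_top i)]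
    _ ≤ ENNReal.ofReal (Real.exp (∑ i ∈ s, (p i).toReal)) :=
        ofReal_le_ofReal (Real.prod_one_add_le_exp_sum s fun _ => toReal_nonneg)
    _ ≤ ENNReal.ofReal (Real.exp (∑' i, p i).toReal) := by
        rw [← toReal_sum fun i _ => hp_top i]
        exact ofReal_le_ofReal (Real.exp_le_exp.mpr (toReal_mono hp (ENNReal.sum_le_tsum s)))

theorem lintegral_sum_pow_le_of_iIndepFun {Ω ι : Type*} [MeasurableSpace Ω] {P : Measure Ω}
    [IsProbabilityMeasure P] {X : ι → Ω → ℝ≥0∞} (hmeas : ∀ i, Measurable (X i))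
    (h01 : ∀ i ω, X i ω = 0 ∨ X i ω = 1) (hindep : iIndepFun X P) (s : Finset ι) (k : ℕ) :
    ∫⁻ ω, (∑ i ∈ s, X i ω) ^ k ∂P ≤ (k : ℝ≥0∞) ^ k * ∏ i ∈ s, (1 + ∫⁻ ω, X i ω ∂P) := by
  have hmeas' : ∀ i, Measurable fun ω => 1 + X i ω := fun i => measurable_const.add (hmeas i)
  have hindep' : iIndepFun (fun i ω => 1 + X i ω) P :=
    hindep.comp (fun _ x => 1 + x) fun _ => by fun_prop
  calc ∫⁻ ω, (∑ i ∈ s, X i ω) ^ k ∂P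
      ≤ ∫⁻ ω, (k : ℝ≥0∞) ^ k * ∏ i ∈ s, (1 + X i ω) ∂P :=
        lintegral_mono fun ω => sum_pow_le_pow_self_mul_prod_one_add (h01 · ω) s k
    _ = (k : ℝ≥0∞) ^ k * ∏ i ∈ s, ∫⁻ ω, 1 + X i ω ∂P := by
        rw [lintegral_const_mul _ (Finset.measurable_prod s fun i _ => hmeas' i),
          lintegral_prod_eq_prod_lintegral_of_indepFun s _ hindep' hmeas']
    _ = (k : ℝ≥0∞) ^ k * ∏ i ∈ s, (1 + ∫⁻ ω, X i ω ∂P) := by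
        simp_rw [lintegral_add_left measurable_const, lintegral_const, measure_univ, mul_one]

theorem lintegral_tsum_pow_eq_iSup {Ω : Type*} [MeasurableSpace Ω] {P : Measure Ω}
    {X : ℕ → Ω → ℝ≥0∞} (hmeas : ∀ i, Measurable (X i)) (k : ℕ) :
    ∫⁻ ω, (∑' i, X i ω) ^ k ∂P = ⨆ n, ∫⁻ ω, (∑ i ∈ Finset.range n, X i ω) ^ k ∂P := by
  simp_rw [ENNReal.tsum_eq_iSup_nat, ENNReal.iSup_pow]
  refine lintegral_iSup (fun n => (Finset.measurable_sum _ fun i _ => hmeas i).pow_const k) ?_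
  intro m n hmn ω
  exact pow_le_pow_left' (Finset.sum_le_sum_of_subset (Finset.range_subset_range.mpr hmn)) k

/-- Let `(X i)_{i ∈ ℕ}` be a mutually independent family of `{0,1}`-valued
random variables on a probability space with `∑ i, E[X i] < ∞`, and let `X = ∑' i, X i`.
Then `E[X^k] < ∞` for every `k ∈ ℕ` (the finite moments property). -/
theorem finite_moments_of_indep_indicator_sum
    {Ω : Type*} [MeasurableSpace Ω] (P : Measure Ω) [IsProbabilityMeasure P]
    (X : ℕ → Ω → ℝ≥0∞) (hmeas : ∀ i, Measurable (X i))
    (h01 : ∀ i ω, X i ω = 0 ∨ X i ω = 1)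
    (hindep : iIndepFun X P)
    (hsum : ∑' i, ∫⁻ ω, X i ω ∂P < ⊤) :
    ∀ k : ℕ, ∫⁻ ω, (∑' i, X i ω) ^ k ∂P < ⊤ := by
  intro k
  have hbound : ∀ n, ∫⁻ ω, (∑ i ∈ Finset.range n, X i ω) ^ k ∂P ≤
      (k : ℝ≥0∞) ^ k * ENNReal.ofReal (Real.exp (∑' i, ∫⁻ ω, X i ω ∂P).toReal) := fun n =>
    (lintegral_sum_pow_le_of_iIndepFun hmeas h01 hindep _ k).trans <|
      mul_le_mul_right (prod_one_add_le_ofReal_exp_tsum hsum.ne _) _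
  rw [lintegral_tsum_pow_eq_iSup hmeas]
  exact (iSup_le hbound).trans_lt (mul_lt_top (pow_lt_top (natCast_lt_top k)) ofReal_lt_top)
end

section
/- Let U be a countable set and (a_i, b_i)_{i∈ℕ₊} pairs of elements of U with a_i ≠ b_i and the two-element sets {a_i, b_i} pairwise disjoint. Let F = {(a_i,b_i) : i ∈ ℕ₊} ∪ {(b_i,a_i) : i ∈ ℕ₊} ⊆ U×U and define p : U×U → [0,1] by p((a_i,b_i)) = p((b_i,a_i)) = 1/i² and p(f) = 0 for f ∉ F. Let μ be a probability distribution on finite subsets of U×U that is tuple-independent with marginals p (for every finite S ⊆ U×U, Pr_{I∼μ}(S ⊆ I) = ∏_{f∈S} p(f)). Define V(I) = {(x,y) : (x,y) ∈ I and (y,x) ∈ I} and let ν be the pushforward of μ under V. Then: (i) ν-almost every world D is a simple undirected graph database, i.e., (x,y) ∈ D iff (y,x) ∈ D, and (x,x) ∉ D for all x; and (ii) for every finite set J ⊆ ℕ₊, Pr_{D∼ν}((a_i,b_i) ∈ D for all i ∈ J) = ∏_{i∈J} i^{−4}. -/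
/-!
The self-join squares marginals: `(x, y) ∈ symView I` iff `I` contains both `(x, y)` and
`(y, x)`, so the event that the edges indexed by `J` survive is `S ⊆ I` for the set `S` of both
orientations of these edges. Tuple independence and disjointness of the edges give probability
`∏ i ∈ J, (1/i²)² = ∏ i ∈ J, 1/i⁴`. Loops have marginal `0`, so almost surely none occurs, and
`symView I` is symmetric by construction.
-/

open MeasureTheory ENNReal

/-- The semantics of the conjunctive query `Φ(x,y) = E(x,y) ∧ E(y,x)`: it keeps from `I`
exactly those pairs whose reverse also lies in `I`. -/
def symView {U : Type*} [DecidableEq U] (I : Finset (U × U)) : Finset (U × U) :=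
  I.filter (fun f => (f.2, f.1) ∈ I)

section symView

variable {U : Type*} [DecidableEq U] {I : Finset (U × U)}

theorem mem_symView {f : U × U} : f ∈ symView I ↔ f ∈ I ∧ f.swap ∈ I :=
  Finset.mem_filter

theorem mem_symView_comm {x y : U} : (x, y) ∈ symView I ↔ (y, x) ∈ symView I := by
  simp only [mem_symView, Prod.swap_prod_mk, and_comm]

theorem diag_mem_symView {x : U} : (x, x) ∈ symView I ↔ (x, x) ∈ I := by
  simp only [mem_symView, Prod.swap_prod_mk, and_self]

theorem mem_symView_iff_pair_subset {x y : U} :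
    (x, y) ∈ symView I ↔ ({(x, y), (y, x)} : Finset (U × U)) ⊆ I := by
  simp only [mem_symView, Prod.swap_prod_mk, Finset.insert_subset_iff,
    Finset.singleton_subset_iff]

end symView

theorem measure_eq_one_of_compl_eq_zero {Ω : Type*} [MeasurableSpace Ω] {μ : Measure Ω}
    [IsProbabilityMeasure μ] {s : Set Ω} (hs : μ sᶜ = 0) : μ s = 1 :=
  (prob_compl_eq_zero_iff₀ (NullMeasurableSet.of_null hs).of_compl).mp hs

def IsTupleIndependent {α : Type*} [MeasurableSpace (Finset α)] (μ : Measure (Finset α))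
    (p : α → ℝ≥0∞) : Prop :=
  ∀ S : Finset α, μ {I | S ⊆ I} = ∏ f ∈ S, p f

namespace IsTupleIndependent

variable {α : Type*} [MeasurableSpace (Finset α)] {μ : Measure (Finset α)} {p : α → ℝ≥0∞}

theorem measure_mem (hμ : IsTupleIndependent μ p) (f : α) : μ {I | f ∈ I} = p f := by
  simpa only [Finset.singleton_subset_iff, Finset.prod_singleton] using hμ {f}

theorem measure_exists_mem_eq_zero (hμ : IsTupleIndependent μ p) {ι : Type*} [Countable ι]
    (g : ι → α) (hg : ∀ i, p (g i) = 0) : μ {I | ∃ i, g i ∈ I} = 0 := by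
  simp only [Set.ofPred_exists]
  exact measure_iUnion_null fun i => (hμ.measure_mem (g i)).trans (hg i)

theorem measure_forall_subset [DecidableEq α] (hμ : IsTupleIndependent μ p) {ι : Type*}
    {J : Finset ι} {S : ι → Finset α} (hS : Set.PairwiseDisjoint (↑J) S) :
    μ {I | ∀ i ∈ J, S i ⊆ I} = ∏ i ∈ J, ∏ f ∈ S i, p f := by
  simp only [← Finset.biUnion_subset]
  rw [hμ, Finset.prod_biUnion hS]

end IsTupleIndependent

theorem pairwiseDisjoint_pairs {U ι : Type*} [DecidableEq U] {a b : ι → U}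
    (hdisj : ∀ i j : ι, i ≠ j → ({a i, b i} : Set U) ∩ {a j, b j} = ∅) (J : Set ι) :
    J.PairwiseDisjoint fun i => ({(a i, b i), (b i, a i)} : Finset (U × U)) := by
  intro i _ j _ hij
  rw [Function.onFun, Finset.disjoint_left]
  have fst_mem : ∀ k, ∀ f ∈ ({(a k, b k), (b k, a k)} : Finset (U × U)),
      f.1 ∈ ({a k, b k} : Set U) := by
    intro k f hf
    rcases Finset.mem_insert.mp hf with rfl | hf
    · exact Set.mem_insert _ _
    · rw [Finset.mem_singleton.mp hf]
      exact Set.mem_insert_of_mem _ rfl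
  intro f hfi hfj
  exact Set.eq_empty_iff_forall_notMem.mp (hdisj i j hij) f.1 ⟨fst_mem i f hfi, fst_mem j f hfj⟩

theorem diag_ne_pair {U : Type*} {u v x : U} (h : u ≠ v) : (x, x) ≠ (u, v) :=
  fun hx => h ((Prod.mk.inj hx).1.symm.trans (Prod.mk.inj hx).2)

theorem cq_self_join_representation_general
    {U : Type*} [Countable U] [DecidableEq U]
    (a b : ℕ+ → U)
    (hab : ∀ i, a i ≠ b i)
    (hdisj : ∀ i j : ℕ+, i ≠ j → ({a i, b i} : Set U) ∩ {a j, b j} = ∅)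
    (p : U × U → ℝ≥0∞)
    (hpab : ∀ i : ℕ+, p (a i, b i) = 1 / ((i : ℕ) : ℝ≥0∞) ^ 2)
    (hpba : ∀ i : ℕ+, p (b i, a i) = 1 / ((i : ℕ) : ℝ≥0∞) ^ 2)
    (hp0 : ∀ f : U × U, (∀ i : ℕ+, f ≠ (a i, b i) ∧ f ≠ (b i, a i)) → p f = 0)
    [MeasurableSpace (Finset (U × U))]
    (μ : Measure (Finset (U × U))) [IsProbabilityMeasure μ]
    (hTI : ∀ S : Finset (U × U), μ {I | S ⊆ I} = ∏ f ∈ S, p f) :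
    μ {I | (∀ x y : U, ((x, y) ∈ symView I ↔ (y, x) ∈ symView I)) ∧
        ∀ x : U, (x, x) ∉ symView I} = 1 ∧
      ∀ J : Finset ℕ+,
        μ {I | ∀ i ∈ J, (a i, b i) ∈ symView I} =
          ∏ i ∈ J, (1 / ((i : ℕ) : ℝ≥0∞) ^ 4) := by
  have hμ : IsTupleIndependent μ p := hTI
  refine ⟨measure_eq_one_of_compl_eq_zero ?_, fun J => ?_⟩
  · have hloop : ∀ x : U, p (x, x) = 0 := fun x =>
      hp0 _ fun i => ⟨diag_ne_pair (hab i), diag_ne_pair (hab i).symm⟩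
    convert hμ.measure_exists_mem_eq_zero (fun x => (x, x)) hloop using 2
    ext I
    rw [Set.mem_compl_iff, Set.mem_ofPred_eq, Set.mem_ofPred_eq,
      and_iff_right fun _ _ => mem_symView_comm]
    simp only [diag_mem_symView, not_forall, not_not]
  · simp only [mem_symView_iff_pair_subset]
    rw [hμ.measure_forall_subset (pairwiseDisjoint_pairs hdisj _)]
    refine Finset.prod_congr rfl fun i _ => ?_
    rw [Finset.prod_pair fun h => hab i (congrArg Prod.fst h), hpab, hpba, one_div, ENNReal.inv_pow, ← pow_add, one_div, ENNReal.inv_pow]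

/-- Let `U` be countable, `(a i, b i)_{i ∈ ℕ₊}` pairs with `a i ≠ b i`
and the sets `{a i, b i}` pairwise disjoint. Let `p` assign probability `1/i²` to
`(a i, b i)` and `(b i, a i)` and `0` to every other pair, and let `μ` be a
tuple-independent distribution on finite subsets of `U × U` with marginals `p`. Let `ν`
be the pushforward of `μ` under `V(I) = {(x,y) ∈ I : (y,x) ∈ I}`. Then (i) `ν`-almost
every world is a simple undirected graph database, and (ii) for every finite `J ⊆ ℕ₊`,
`Pr_{D∼ν}(∀ i ∈ J, (a i, b i) ∈ D) = ∏_{i∈J} i⁻⁴`. -/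
theorem cq_self_join_representation
    {U : Type*} [Countable U] [DecidableEq U]
    (a b : ℕ+ → U)
    (hab : ∀ i, a i ≠ b i)
    (hdisj : ∀ i j : ℕ+, i ≠ j → ({a i, b i} : Set U) ∩ {a j, b j} = ∅)
    (p : U × U → ℝ≥0∞)
    (hpab : ∀ i : ℕ+, p (a i, b i) = 1 / ((i : ℕ) : ℝ≥0∞) ^ 2)
    (hpba : ∀ i : ℕ+, p (b i, a i) = 1 / ((i : ℕ) : ℝ≥0∞) ^ 2)
    (hp0 : ∀ f : U × U, (∀ i : ℕ+, f ≠ (a i, b i) ∧ f ≠ (b i, a i)) → p f = 0)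
    [MeasurableSpace (Finset (U × U))] [MeasurableSingletonClass (Finset (U × U))]
    (μ : Measure (Finset (U × U))) [IsProbabilityMeasure μ]
    (hTI : ∀ S : Finset (U × U), μ {I | S ⊆ I} = ∏ f ∈ S, p f) :
    μ {I | (∀ x y : U, ((x, y) ∈ symView I ↔ (y, x) ∈ symView I)) ∧
        ∀ x : U, (x, x) ∉ symView I} = 1 ∧
      ∀ J : Finset ℕ+,
        μ {I | ∀ i ∈ J, (a i, b i) ∈ symView I} =
          ∏ i ∈ J, (1 / ((i : ℕ) : ℝ≥0∞) ^ 4) :=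
  cq_self_join_representation_general a b hab hdisj p hpab hpba hp0 μ hTI
end
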